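/- In a CFG, suppose v' is a proper postdominator of v, let v'' = fppd(v), and assume v' ≠ v''. If v stays outside Q until v', then (i) v stays outside Q until v'', and (ii) v'' stays outside Q until v' (note that v' postdominates v''). -/

import Mathlib

namespace Slicing

/-- A path is a nonempty list of nodes, consecutive ones related by `succ`,
starting at `v` and ending at `v'`. -/
def IsPath {V : Type} (succ : V → V → Prop) (p : List V) (v v' : V) : Prop :=
  p.Chain' succ ∧ p.head? = some v ∧ p.getLast? = some v'

/-- A control-flow graph: an edge relation and an `End` node with no successors,
reachable from every node. -/
structure CFG (V : Type) where
  succ : V → V → Prop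
  End : V
  end_no_succ : ∀ w, ¬ succ End w
  reach_end : ∀ v, ∃ p, IsPath succ p v End

variable {V : Type}

/-- `v1` postdominates `v`. -/
def PD (G : CFG V) (v v1 : V) : Prop :=
  ∀ p, IsPath G.succ p v G.End → v1 ∈ p

/-- `v1` is a proper postdominator of `v`. -/
def ProperPD (G : CFG V) (v v1 : V) : Prop :=
  PD G v v1 ∧ v1 ≠ v

/-- `v1` is a first proper postdominator of `v`: every path from `v` to any other
proper postdominator of `v` contains `v1`. -/
def IsFPPD (G : CFG V) (v v1 : V) : Prop :=
  ProperPD G v v1 ∧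
    ∀ v2, ProperPD G v v2 → v2 ≠ v1 → ∀ p, IsPath G.succ p v v2 → v1 ∈ p

/-- Maximum number of edges of an acyclic path from `v` to `v'`. -/
noncomputable def LAP (G : CFG V) (v v' : V) : ℕ :=
  sSup {n | ∃ p, IsPath G.succ p v v' ∧ p.Nodup ∧ p.length = n + 1}

/-- A node is cycle-inducing if, with `v'` its first proper postdominator,
some successor `vi` of `v` satisfies `LAP vi v' ≥ LAP v v'`. -/
def CycleInducing (G : CFG V) (v : V) : Prop :=
  ∃ v', IsFPPD G v v' ∧ ∃ vi, G.succ v vi ∧ LAP G v v' ≤ LAP G vi v'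

/-- `v` stays outside `Q` until `v'`: every path from `v` to `v'` in which `v'`
occurs only at the final position contains no node of `Q` except possibly `v'`. -/
def StaysOutside (G : CFG V) (Q : Set V) (v v' : V) : Prop :=
  ∀ p, IsPath G.succ p v v' → v' ∉ p.dropLast → ∀ w ∈ p, w ∈ Q → w = v'

/-- `v2` is data dependent on `v1`. -/
def DataDep {Var : Type} (G : CFG V) (Def Use : V → Set Var) (v1 v2 : V) : Prop :=
  ∃ x, x ∈ Use v2 ∧ x ∈ Def v1 ∧
    ∃ p, IsPath G.succ p v1 v2 ∧ 2 ≤ p.length ∧ ∀ w ∈ p.tail.dropLast, x ∉ Def w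

/-- `Q` is closed under data dependence. -/
def ClosedDD {Var : Type} (G : CFG V) (Def Use : V → Set Var) (Q : Set V) : Prop :=
  ∀ v1 v2, v2 ∈ Q → DataDep G Def Use v1 v2 → v1 ∈ Q

/-- The `Q`-relevant variables at `v`. -/
def rv {Var : Type} (G : CFG V) (Def Use : V → Set Var) (Q : Set V) (v : V) : Set Var :=
  {x | ∃ v' ∈ Q, x ∈ Use v' ∧
    ∃ p, IsPath G.succ p v v' ∧ p.Nodup ∧ ∀ w ∈ p, w ≠ v' → x ∉ Def w}

/-- `v'` is a next visible in `Q` of `v`. -/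
def IsNextVisible (G : CFG V) (Q : Set V) (v v' : V) : Prop :=
  (v' ∈ Q ∨ v' = G.End) ∧
    ∀ u, (u ∈ Q ∨ u = G.End) → ∀ p, IsPath G.succ p v u → v' ∈ p

/-- `Q` provides next visibles. -/
def ProvidesNextVisibles (G : CFG V) (Q : Set V) : Prop :=
  ∀ v, ∃ v', IsNextVisible G Q v v'

/-- A weak slice set provides next visibles and is closed under data dependence. -/
def WeakSliceSet {Var : Type} (G : CFG V) (Def Use : V → Set Var) (Q : Set V) : Prop :=
  ProvidesNextVisibles G Q ∧ ClosedDD G Def Use Q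

end Slicing

/-! The first proper postdominator `v''` lies on every path from `v` to `v'`, strictly before
the first `v'`. Cutting a path from `v` to `End` therefore gives a path `v ⤳ v''` avoiding `v'`,
and continuing it from `v''` to `End` gives a path `v'' ⤳ v'` meeting `v'` only at its end.
Prefixing a first-hit path `v'' ⤳ v'` with the former, or extending a first-hit path `v ⤳ v''`
(which cannot contain `v'`) by the latter, yields a first-hit path `v ⤳ v'`, to which the
hypothesis applies. -/

namespace Slicing

section Paths

variable {V : Type} {succ : V → V → Prop} {p q s t : List V} {a b m x : V}

theorem IsPath.ne_nil (hp : IsPath succ p a b) : p ≠ [] := by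
  rintro rfl
  simp [IsPath] at hp

theorem IsPath.eq_cons_tail (hp : IsPath succ p a b) : p = a :: p.tail := by
  obtain ⟨-, hhead, -⟩ := hp
  cases p <;> simp_all

theorem IsPath.eq_dropLast_append (hp : IsPath succ p a b) : p = p.dropLast ++ [b] := by
  obtain ⟨-, -, hlast⟩ := hp
  rw [List.getLast?_eq_some_iff] at hlast
  obtain ⟨l, rfl⟩ := hlast
  simp

theorem isPath_append_cons_iff :
    IsPath succ (s ++ x :: t) a b ↔ IsPath succ (s ++ [x]) a x ∧ IsPath succ (x :: t) x b := by
  have hhead : (s ++ x :: t).head? = (s ++ [x]).head? := by simp [List.head?_append]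
  have hlast : (s ++ x :: t).getLast? = (x :: t).getLast? := by
    rw [List.getLast?_append, List.getLast?_cons]; rfl
  simp only [IsPath, List.Chain', List.isChain_append (l₁ := s), hhead, hlast,
    List.isChain_singleton, List.getLast?_concat, List.head?_cons]
  simp only [Option.mem_def, Option.some.injEq, forall_eq', true_and, and_true]
  tauto

theorem IsPath.dropLast_append (hp : IsPath succ p a m) (hq : IsPath succ q m b) :
    IsPath succ (p.dropLast ++ q) a b := by
  have hp' : IsPath succ (p.dropLast ++ [m]) a m := hp.eq_dropLast_append ▸ hp
  have hq' : IsPath succ (m :: q.tail) m b := hq.eq_cons_tail ▸ hq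
  rw [hq.eq_cons_tail]
  exact isPath_append_cons_iff.2 ⟨hp', hq'⟩

theorem IsPath.subset_dropLast_append (hp : IsPath succ p a m) (hq : IsPath succ q m b) :
    p ⊆ p.dropLast ++ q := by
  rw [hp.eq_dropLast_append, hq.eq_cons_tail, List.dropLast_concat]
  simp

theorem not_mem_dropLast_dropLast_append (hq : q ≠ []) (hxp : x ∉ p) (hxq : x ∉ q.dropLast) :
    x ∉ (p.dropLast ++ q).dropLast := by
  rw [List.dropLast_append_of_ne_nil hq, List.mem_append, not_or]
  exact ⟨fun h => hxp (List.dropLast_subset p h), hxq⟩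

end Paths

variable {V : Type} {G : CFG V} {v v' v'' : V}

theorem IsFPPD.mem_of_isPath_append_cons (hf : IsFPPD G v v'') (hpd : ProperPD G v v')
    (hne : v' ≠ v'') {s t : List V} {b : V} (hp : IsPath G.succ (s ++ v' :: t) v b) :
    v'' ∈ s := by
  have := hf.2 v' hpd hne _ (isPath_append_cons_iff.1 hp).1
  simpa [Ne.symm hne] using this

theorem IsFPPD.not_mem_of_isPath (hf : IsFPPD G v v'') (hpd : ProperPD G v v')
    (hne : v' ≠ v'') {p : List V} (hp : IsPath G.succ p v v'') (hv'' : v'' ∉ p.dropLast) :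
    v' ∉ p := by
  intro hv'
  obtain ⟨s, t, rfl⟩ := List.append_of_mem hv'
  apply hv''
  rw [List.dropLast_append_cons]
  exact List.mem_append_left _ (hf.mem_of_isPath_append_cons hpd hne hp)

theorem IsFPPD.exists_isPath_not_mem (hf : IsFPPD G v v'') (hpd : ProperPD G v v')
    (hne : v' ≠ v'') : ∃ p, IsPath G.succ p v v'' ∧ v' ∉ p := by
  classical
  obtain ⟨r, hr⟩ := G.reach_end v
  obtain ⟨s, t, hv's, rfl, -⟩ := List.exists_erase_eq (hpd.1 r hr)
  obtain ⟨s₁, s₂, rfl⟩ := List.append_of_mem (hf.mem_of_isPath_append_cons hpd hne hr)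
  rw [List.append_assoc, List.cons_append] at hr
  refine ⟨s₁ ++ [v''], (isPath_append_cons_iff.1 hr).1, ?_⟩
  simp only [List.mem_append, List.mem_cons, List.not_mem_nil, or_false, not_or] at hv's ⊢
  exact ⟨hv's.1, hne⟩

theorem IsFPPD.exists_isPath_properPD (hf : IsFPPD G v v'') (hpd : ProperPD G v v')
    (hne : v' ≠ v'') : ∃ q, IsPath G.succ q v'' v' ∧ v' ∉ q.dropLast := by
  classical
  obtain ⟨p, hp, hv'p⟩ := hf.exists_isPath_not_mem hpd hne
  obtain ⟨r, hr⟩ := G.reach_end v''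
  have hv'r : v' ∈ r :=
    (List.mem_append.1 (hpd.1 _ (hp.dropLast_append hr))).resolve_left
      fun h => hv'p (List.dropLast_subset p h)
  obtain ⟨s, t, hv's, rfl, -⟩ := List.exists_erase_eq hv'r
  exact ⟨s ++ [v'], (isPath_append_cons_iff.1 hr).1, by rwa [List.dropLast_concat]⟩

theorem staysOutside_decomp_general {V : Type} (G : CFG V) (Q : Set V)
    (v v' v'' : V) (hpd : ProperPD G v v') (hf : IsFPPD G v v'')
    (hne : v' ≠ v'') (hso : StaysOutside G Q v v') :
    StaysOutside G Q v v'' ∧ StaysOutside G Q v'' v' := by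
  obtain ⟨p₀, hp₀, hv'p₀⟩ := hf.exists_isPath_not_mem hpd hne
  obtain ⟨q₀, hq₀, hv'q₀⟩ := hf.exists_isPath_properPD hpd hne
  constructor
  · intro p hp hv''p w hw hwQ
    have hv'p := hf.not_mem_of_isPath hpd hne hp hv''p
    have hpq₀ := not_mem_dropLast_dropLast_append hq₀.ne_nil hv'p hv'q₀
    have hwv' := hso _ (hp.dropLast_append hq₀) hpq₀ w (hp.subset_dropLast_append hq₀ hw) hwQ
    exact absurd (hwv' ▸ hw) hv'p
  · intro q hq hv'q w hw hwQ
    have hp₀q := not_mem_dropLast_dropLast_append hq.ne_nil hv'p₀ hv'q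
    exact hso _ (hp₀.dropLast_append hq) hp₀q w (List.mem_append_right _ hw) hwQ

/-- Decomposition of "stays outside": if `v'` is a proper postdominator of `v`,
`v''` is the first proper postdominator of `v`, `v' ≠ v''`, and `v` stays outside
`Q` until `v'`, then `v` stays outside `Q` until `v''` and `v''` stays outside
`Q` until `v'`. -/
theorem staysOutside_decomp {V : Type} [Fintype V] (G : CFG V) (Q : Set V)
    (v v' v'' : V) (hpd : ProperPD G v v') (hf : IsFPPD G v v'')
    (hne : v' ≠ v'') (hso : StaysOutside G Q v v') :
    StaysOutside G Q v v'' ∧ StaysOutside G Q v'' v' :=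
  staysOutside_decomp_general G Q v v' v'' hpd hf hne hso

end Slicing
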